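/- arXiv:1205.3554 — 6 statements merged into one kernel-verified Lean document; each statement's English description precedes it below -/
import Mathlib

section
/- Let p and q be probability mass functions on a countable set S with SD(p, q) ≤ ε. Let E ⊆ S be an event such that p(E) ≥ δ > 0 and q(E) > 0. Then the conditional distributions satisfy SD(p|E, q|E) ≤ ε/δ. -/
/-- Statistical distance between two (real-valued) mass functions:
`SD(p, q) = (1/2) · Σ_{s ∈ S} |p(s) − q(s)|`. -/
noncomputable def SD {S : Type*} (p q : S → ℝ) : ℝ := (1 / 2) * ∑' s, |p s - q s|

/-- `p` is a probability mass function: pointwise nonnegative and summing to 1. -/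
def IsPMF {S : Type*} (p : S → ℝ) : Prop := (∀ s, 0 ≤ p s) ∧ HasSum p 1

lemma summable_max_aux {S : Type*} (f : S → ℝ) (hf : Summable f) :
    Summable fun s => max (f s) 0 :=
  hf.abs.of_nonneg_of_le (fun s => le_max_right _ _)
    (fun s => max_le (le_abs_self _) (abs_nonneg _))

lemma half_tsum_abs {S : Type*} (f : S → ℝ) (hf : Summable f) (h0 : ∑' s, f s = 0) :
    (1/2) * ∑' s, |f s| = ∑' s, max (f s) 0 := by
  have hmax : Summable fun s => max (f s) 0 := summable_max_aux f hf
  have key : ∀ s, |f s| = 2 * max (f s) 0 - f s := by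
    intro s
    rcases le_total (f s) 0 with h | h
    · rw [abs_of_nonpos h, max_eq_right h]; ring
    · rw [abs_of_nonneg h, max_eq_left h]; ring
  calc (1/2) * ∑' s, |f s| = (1/2) * ∑' s, (2 * max (f s) 0 - f s) := by simp_rw [key]
    _ = (1/2) * (2 * ∑' s, max (f s) 0 - ∑' s, f s) := by
        rw [Summable.tsum_sub (hmax.mul_left 2) hf, tsum_mul_left]
    _ = ∑' s, max (f s) 0 := by rw [h0]; ring

lemma sd_cond_aux {S : Type*} (p q : S → ℝ) (E : Set S)
    (hq0 : ∀ s, 0 ≤ q s)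
    (hps : Summable p) (hqs : Summable q)
    (hQ : 0 < ∑' s, E.indicator q s)
    (hPQ : ∑' s, E.indicator q s ≤ ∑' s, E.indicator p s) :
    SD (fun s => E.indicator p s / ∑' t, E.indicator p t)
       (fun s => E.indicator q s / ∑' t, E.indicator q t)
      ≤ (∑' s, max (p s - q s) 0) / ∑' t, E.indicator p t := by
  set P := ∑' t, E.indicator p t with hPdef
  set Q := ∑' t, E.indicator q t with hQdef
  have hP : 0 < P := lt_of_lt_of_le hQ hPQ
  have sa : Summable (E.indicator p) := hps.indicator E
  have sb : Summable (E.indicator q) := hqs.indicator E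
  set f : S → ℝ := fun s => E.indicator p s / P - E.indicator q s / Q with hfdef
  have hsf : Summable f := (sa.div_const P).sub (sb.div_const Q)
  have htf : ∑' s, f s = 0 := by
    rw [Summable.tsum_sub (sa.div_const P) (sb.div_const Q), tsum_div_const, tsum_div_const,
      ← hPdef, ← hQdef, div_self hP.ne', div_self hQ.ne', sub_self]
  have hSDeq : SD (fun s => E.indicator p s / P) (fun s => E.indicator q s / Q)
      = ∑' s, max (f s) 0 := by
    rw [SD]
    exact half_tsum_abs f hsf htf
  rw [hSDeq]
  have hmaxpq : Summable fun s => max (p s - q s) 0 := summable_max_aux _ (hps.sub hqs)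
  have hpt : ∀ s, max (f s) 0 ≤ max (p s - q s) 0 / P := by
    intro s
    by_cases hs : s ∈ E
    · have hind_p : E.indicator p s = p s := Set.indicator_of_mem hs p
      have hind_q : E.indicator q s = q s := Set.indicator_of_mem hs q
      have h1 : q s / P ≤ q s / Q := div_le_div_of_nonneg_left (hq0 s) hQ hPQ
      have h2 : f s ≤ (p s - q s) / P := by
        rw [hfdef]
        simp only [hind_p, hind_q]
        rw [sub_div]
        linarith
      calc max (f s) 0 ≤ max ((p s - q s) / P) 0 := max_le_max h2 le_rfl
        _ = max (p s - q s) 0 / P := by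
            have h := max_div_div_right hP.le (p s - q s) 0
            rw [zero_div] at h
            exact h
    · have hind_p : E.indicator p s = 0 := Set.indicator_of_notMem hs p
      have hind_q : E.indicator q s = 0 := Set.indicator_of_notMem hs q
      have : f s = 0 := by rw [hfdef]; simp [hind_p, hind_q]
      rw [this, max_self]
      positivity
  calc ∑' s, max (f s) 0 ≤ ∑' s, max (p s - q s) 0 / P :=
        Summable.tsum_le_tsum hpt (summable_max_aux f hsf) (hmaxpq.div_const P)
    _ = (∑' s, max (p s - q s) 0) / P := by rw [tsum_div_const]

/-- Lemma `blow`: if `SD(p,q) ≤ ε`, `p(E) ≥ δ > 0` and `q(E) > 0`,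
then the conditional distributions satisfy `SD(p|E, q|E) ≤ ε/δ`. -/
theorem sd_cond_le {S : Type*} [Countable S] (p q : S → ℝ)
    (hp : IsPMF p) (hq : IsPMF q) (E : Set S) (ε δ : ℝ)
    (hδ : 0 < δ)
    (hpE : δ ≤ ∑' s, E.indicator p s)
    (hqE : 0 < ∑' s, E.indicator q s)
    (hSD : SD p q ≤ ε) :
    SD (fun s => E.indicator p s / ∑' t, E.indicator p t)
       (fun s => E.indicator q s / ∑' t, E.indicator q t) ≤ ε / δ := by
  obtain ⟨hp0, hps⟩ := hp
  obtain ⟨hq0, hqs⟩ := hq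
  have hsp : Summable p := hps.summable
  have hsq : Summable q := hqs.summable
  have hpsub : Summable (fun s => p s - q s) := hsp.sub hsq
  have htsub : ∑' s, (p s - q s) = 0 := by
    rw [Summable.tsum_sub hsp hsq, hps.tsum_eq, hqs.tsum_eq, sub_self]
  have hSDnn : 0 ≤ SD p q := by
    rw [SD]
    have : 0 ≤ ∑' s, |p s - q s| := tsum_nonneg (fun s => abs_nonneg _)
    linarith
  have hε : 0 ≤ ε := le_trans hSDnn hSD
  have hSDmax : SD p q = ∑' s, max (p s - q s) 0 := by
    rw [SD]; exact half_tsum_abs _ hpsub htsub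
  have hSDmax' : SD q p = ∑' s, max (q s - p s) 0 := by
    rw [SD]
    refine half_tsum_abs _ (hsq.sub hsp) ?_
    rw [Summable.tsum_sub hsq hsp, hps.tsum_eq, hqs.tsum_eq, sub_self]
  have hSDsymm : SD q p = SD p q := by
    rw [SD, SD]
    congr 1
    exact tsum_congr fun s => abs_sub_comm _ _
  have hpE' : 0 < ∑' s, E.indicator p s := lt_of_lt_of_le hδ hpE
  rcases le_total (∑' s, E.indicator q s) (∑' s, E.indicator p s) with h | h
  · have := sd_cond_aux p q E hq0 hsp hsq hqE h
    calc SD (fun s => E.indicator p s / ∑' t, E.indicator p t)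
          (fun s => E.indicator q s / ∑' t, E.indicator q t)
        ≤ (∑' s, max (p s - q s) 0) / ∑' t, E.indicator p t := this
      _ = SD p q / ∑' t, E.indicator p t := by rw [hSDmax]
      _ ≤ ε / δ := div_le_div₀ hε hSD hδ hpE
  · have hsymmSD : SD (fun s => E.indicator p s / ∑' t, E.indicator p t)
        (fun s => E.indicator q s / ∑' t, E.indicator q t)
      = SD (fun s => E.indicator q s / ∑' t, E.indicator q t)
        (fun s => E.indicator p s / ∑' t, E.indicator p t) := by
      rw [SD, SD]
      congr 1
      exact tsum_congr fun s => abs_sub_comm _ _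
    rw [hsymmSD]
    have := sd_cond_aux q p E hp0 hsq hsp hpE' h
    calc SD (fun s => E.indicator q s / ∑' t, E.indicator q t)
          (fun s => E.indicator p s / ∑' t, E.indicator p t)
        ≤ (∑' s, max (q s - p s) 0) / ∑' t, E.indicator q t := this
      _ = SD p q / ∑' t, E.indicator q t := by rw [← hSDmax', hSDsymm]
      _ ≤ ε / δ := div_le_div₀ hε hSD hδ (le_trans hpE h)
end

section
/- Let r be a probability mass function on a product S × T with marginals r₁ on S and r₂ on T. If there exist pmfs u on S and v on T such that SD(r, u ⊗ v) ≤ ε, then SD(r, r₁ ⊗ r₂) ≤ 3ε. -/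
section aux

variable {S T : Type*}

lemma SD_triangle (p q r : S → ℝ) (hp : Summable p) (hq : Summable q) (hr : Summable r) :
    SD p r ≤ SD p q + SD q r := by
  unfold SD
  rw [← mul_add]
  have h1 : Summable fun s => |p s - q s| := (hp.sub hq).abs
  have h2 : Summable fun s => |q s - r s| := (hq.sub hr).abs
  have key : ∑' s, |p s - r s| ≤ ∑' s, (|p s - q s| + |q s - r s|) :=
    Summable.tsum_le_tsum (fun s => abs_sub_le _ _ _) ((hp.sub hr).abs) (h1.add h2)
  rw [Summable.tsum_add h1 h2] at key
  linarith

/-- marginal contraction -/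
lemma SD_fst_le (p q : S × T → ℝ) (hp : Summable p) (hq : Summable q) :
    SD (fun s => ∑' t, p (s, t)) (fun s => ∑' t, q (s, t)) ≤ SD p q := by
  unfold SD
  have habs : Summable fun st : S × T => |p st - q st| := (hp.sub hq).abs
  have hps : ∀ s, Summable fun t => p (s, t) := fun s =>
    hp.comp_injective (fun t₁ t₂ h => by simpa using h)
  have hqs : ∀ s, Summable fun t => q (s, t) := fun s =>
    hq.comp_injective (fun t₁ t₂ h => by simpa using h)
  have hfib : ∀ s, Summable fun t => |p (s, t) - q (s, t)| := fun s => ((hps s).sub (hqs s)).abs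
  have hpt : ∀ s, |(∑' t, p (s, t)) - ∑' t, q (s, t)| ≤ ∑' t, |p (s, t) - q (s, t)| := by
    intro s
    rw [← Summable.tsum_sub (hps s) (hqs s)]
    simpa using norm_tsum_le_tsum_norm (f := fun t => p (s,t) - q (s,t)) (hfib s)
  have hsum2 : Summable fun s => ∑' t, |p (s, t) - q (s, t)| :=
    ((summable_prod_of_nonneg (fun st => abs_nonneg _)).mp habs).2
  have key : ∑' s, |(∑' t, p (s, t)) - ∑' t, q (s, t)| ≤ ∑' st : S × T, |p st - q st| := by
    calc ∑' s, |(∑' t, p (s, t)) - ∑' t, q (s, t)|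
        ≤ ∑' s, ∑' t, |p (s, t) - q (s, t)| :=
          Summable.tsum_le_tsum hpt (Summable.of_nonneg_of_le (fun s => abs_nonneg _) hpt hsum2) hsum2
      _ = ∑' st : S × T, |p st - q st| := (Summable.tsum_prod' habs hfib).symm
  have h2 : (0:ℝ) ≤ 1/2 := by norm_num
  exact mul_le_mul_of_nonneg_left key h2

lemma SD_comm (p q : S → ℝ) : SD p q = SD q p := by
  unfold SD
  congr 1
  exact tsum_congr fun s => abs_sub_comm _ _

lemma SD_snd_le (p q : S × T → ℝ) (hp : Summable p) (hq : Summable q) :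
    SD (fun t => ∑' s, p (s, t)) (fun t => ∑' s, q (s, t)) ≤ SD p q := by
  have hp' : Summable fun ts : T × S => p (ts.2, ts.1) :=
    ((Equiv.prodComm T S).summable_iff (f := p)).mpr hp
  have hq' : Summable fun ts : T × S => q (ts.2, ts.1) :=
    ((Equiv.prodComm T S).summable_iff (f := q)).mpr hq
  have key := SD_fst_le (fun ts : T × S => p (ts.2, ts.1)) (fun ts => q (ts.2, ts.1)) hp' hq'
  have heq : SD (fun ts : T × S => p (ts.2, ts.1)) (fun ts => q (ts.2, ts.1)) = SD p q := by
    unfold SD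
    congr 1
    exact Equiv.tsum_eq (Equiv.prodComm T S) (fun st => |p st - q st|)
  rwa [heq] at key

lemma tsum_prod_mul {f : S → ℝ} {g : T → ℝ} (hf : Summable f) (hg : Summable g) :
    ∑' st : S × T, f st.1 * g st.2 = (∑' s, f s) * (∑' t, g t) := by
  have hf' : Summable fun s => ‖f s‖ := by simpa [Real.norm_eq_abs] using hf.abs
  have hg' : Summable fun t => ‖g t‖ := by simpa [Real.norm_eq_abs] using hg.abs
  exact (tsum_mul_tsum_of_summable_norm hf' hg').symm

lemma SD_prod_left {f g : S → ℝ} {k : T → ℝ} (hf : Summable f) (hg : Summable g)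
    (hk : Summable k) (hknn : ∀ t, 0 ≤ k t) (hk1 : ∑' t, k t = 1) :
    SD (fun st : S × T => f st.1 * k st.2) (fun st => g st.1 * k st.2) = SD f g := by
  unfold SD
  congr 1
  have he : ∀ st : S × T, |f st.1 * k st.2 - g st.1 * k st.2| = |f st.1 - g st.1| * k st.2 :=
    fun st => by rw [← sub_mul, abs_mul, abs_of_nonneg (hknn _)]
  rw [tsum_congr he, tsum_prod_mul ((hf.sub hg).abs) hk, hk1, mul_one]

lemma SD_prod_right {f : S → ℝ} {k k' : T → ℝ} (hf : Summable f) (hfnn : ∀ s, 0 ≤ f s)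
    (hf1 : ∑' s, f s = 1) (hk : Summable k) (hk' : Summable k') :
    SD (fun st : S × T => f st.1 * k st.2) (fun st => f st.1 * k' st.2) = SD k k' := by
  unfold SD
  congr 1
  have he : ∀ st : S × T, |f st.1 * k st.2 - f st.1 * k' st.2| = f st.1 * |k st.2 - k' st.2| :=
    fun st => by rw [← mul_sub, abs_mul, abs_of_nonneg (hfnn _)]
  rw [tsum_congr he, tsum_prod_mul hf ((hk.sub hk').abs), hf1, one_mul]

end aux

/-- Lemma `closeToMargin`: if a joint pmf `r` on `S × T` is `ε`-close to
some product pmf `u ⊗ v`, then it is `3ε`-close to the product of its own marginals. -/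
theorem sd_close_to_product_of_marginals {S T : Type*} [Countable S] [Countable T]
    (r : S × T → ℝ) (hr : IsPMF r)
    (u : S → ℝ) (v : T → ℝ) (hu : IsPMF u) (hv : IsPMF v) (ε : ℝ)
    (h : SD r (fun st => u st.1 * v st.2) ≤ ε) :
    SD r (fun st => (∑' t, r (st.1, t)) * (∑' s, r (s, st.2))) ≤ 3 * ε := by
  classical
  set r1 : S → ℝ := fun s => ∑' t, r (s, t) with hr1def
  set r2 : T → ℝ := fun t => ∑' s, r (s, t) with hr2def
  have hrS : Summable r := hr.2.summable
  have hfib : ∀ s, Summable fun t => r (s, t) := fun s =>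
    hrS.comp_injective (fun t₁ t₂ h => by simpa using h)
  have hfib' : ∀ t, Summable fun s => r (s, t) := fun t =>
    hrS.comp_injective (fun s₁ s₂ h => by simpa using h)
  have hr1 : HasSum r1 1 := hr.2.prod_fiberwise (fun s => (hfib s).hasSum)
  have hr2 : HasSum r2 1 := by
    have hswap : HasSum (fun ts : T × S => r (ts.2, ts.1)) 1 :=
      ((Equiv.prodComm T S).hasSum_iff (f := r)).mpr hr.2
    exact hswap.prod_fiberwise (fun t => (hfib' t).hasSum)
  have hr1nn : ∀ s, 0 ≤ r1 s := fun s => tsum_nonneg fun t => hr.1 _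
  have hr2nn : ∀ t, 0 ≤ r2 t := fun t => tsum_nonneg fun s => hr.1 _
  have hw : Summable fun st : S × T => u st.1 * v st.2 :=
    Summable.mul_of_nonneg hu.2.summable hv.2.summable hu.1 hv.1
  have hr1v : Summable fun st : S × T => r1 st.1 * v st.2 :=
    Summable.mul_of_nonneg hr1.summable hv.2.summable hr1nn hv.1
  have hr1r2 : Summable fun st : S × T => r1 st.1 * r2 st.2 :=
    Summable.mul_of_nonneg hr1.summable hr2.summable hr1nn hr2nn
  -- SD u r1 ≤ ε
  have hur1 : SD u r1 ≤ ε := by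
    have key := SD_fst_le (fun st : S × T => u st.1 * v st.2) r hw hrS
    have heq : (fun s => ∑' t, u s * v t) = u := by
      funext s
      rw [tsum_mul_left, hv.2.tsum_eq, mul_one]
    rw [show (fun s => ∑' t, (fun st : S × T => u st.1 * v st.2) (s, t)) = u from heq] at key
    calc SD u r1 ≤ SD (fun st : S × T => u st.1 * v st.2) r := key
      _ = SD r (fun st : S × T => u st.1 * v st.2) := SD_comm _ _
      _ ≤ ε := h
  -- SD v r2 ≤ ε
  have hvr2 : SD v r2 ≤ ε := by
    have key := SD_snd_le (fun st : S × T => u st.1 * v st.2) r hw hrS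
    have heq : (fun t => ∑' s, u s * v t) = v := by
      funext t
      rw [tsum_mul_right, hu.2.tsum_eq, one_mul]
    rw [show (fun t => ∑' s, (fun st : S × T => u st.1 * v st.2) (s, t)) = v from heq] at key
    calc SD v r2 ≤ SD (fun st : S × T => u st.1 * v st.2) r := key
      _ = SD r (fun st : S × T => u st.1 * v st.2) := SD_comm _ _
      _ ≤ ε := h
  have e1 : SD (fun st : S × T => u st.1 * v st.2) (fun st => r1 st.1 * v st.2) = SD u r1 :=
    SD_prod_left hu.2.summable hr1.summable hv.2.summable hv.1 hv.2.tsum_eq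
  have e2 : SD (fun st : S × T => r1 st.1 * v st.2) (fun st => r1 st.1 * r2 st.2) = SD v r2 :=
    SD_prod_right hr1.summable hr1nn hr1.tsum_eq hv.2.summable hr2.summable
  have t1 : SD r (fun st : S × T => r1 st.1 * r2 st.2) ≤
      SD r (fun st : S × T => u st.1 * v st.2) +
      SD (fun st : S × T => u st.1 * v st.2) (fun st => r1 st.1 * r2 st.2) :=
    SD_triangle _ _ _ hrS hw hr1r2
  have t2 : SD (fun st : S × T => u st.1 * v st.2) (fun st => r1 st.1 * r2 st.2) ≤
      SD (fun st : S × T => u st.1 * v st.2) (fun st => r1 st.1 * v st.2) +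
      SD (fun st : S × T => r1 st.1 * v st.2) (fun st => r1 st.1 * r2 st.2) :=
    SD_triangle _ _ _ hw hr1v hr1r2
  have : SD r (fun st : S × T => r1 st.1 * r2 st.2) ≤ 3 * ε := by
    rw [e1, e2] at t2
    linarith
  exact this
end

section
/- Let r be a probability mass function on S_A × S_B (a joint distribution of random variables a and b) with marginals r₁ on S_A and r₂ on S_B, and suppose SD(r, r₁ ⊗ r₂) ≤ ε. Let f : S_B → C be a (deterministic) function. Define a new joint pmf r' on S_B × S_A by r'(b, a') = r₂(b) · π_{f(b)}(a'), where for c ∈ C with P_r[f(b-component) = c] > 0, π_c(a') is the r-probability that the a-component equals a' conditioned on the event that f of the b-component equals c (i.e., a' is a fresh sample of a conditioned on the leakage c = f(b)). Then SD(r', r₂ ⊗ r₁) ≤ ε. -/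
/-! Let `q b` be the `r₂`-mass of the fibre of `f` through `b`. For `q b > 0`,
`r₂ b · (π_{f b} a' − r₁ a') = (r₂ b / q b) · ∑_{f b' = f b} (r (a', b') − r₁ a' · r₂ b')`, so by
the triangle inequality each term of `SD(r', r₂ ⊗ r₁)` is bounded by the deviations
`|r − r₁ ⊗ r₂|` summed over a fibre and weighted by `r₂ b / q b`; these weights add up to at
most `1` on every fibre. The sums are reordered in `ℝ≥0∞`, where no summability has to be tracked. -/

open scoped ENNReal

noncomputable def fiberSum {β γ M : Type*} [AddCommMonoid M] [TopologicalSpace M]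
    (f : β → γ) (h : β → M) (b : β) : M :=
  ∑' b', {b' | f b' = f b}.indicator h b'

section fiberSum

variable {α β γ : Type*} (f : β → γ)

theorem fiberSum_congr {M : Type*} [AddCommMonoid M] [TopologicalSpace M] (h : β → M)
    {b b' : β} (hb : f b = f b') : fiberSum f h b = fiberSum f h b' := by
  simp only [fiberSum, hb]

theorem le_fiberSum {w : β → ℝ} (hw : ∀ b, 0 ≤ w b) (hs : Summable w) (b : β) :
    w b ≤ fiberSum f w b := by
  simpa [fiberSum] using
    (hs.indicator {b' | f b' = f b}).le_tsum b
      fun b' _ => Set.indicator_nonneg (fun b' _ => hw b') b'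

theorem enorm_fiberSum_sub_le {E : Type*} [NormedAddCommGroup E] [CompleteSpace E] {u v : β → E}
    (hu : Summable u) (hv : Summable v) (b : β) :
    ‖fiberSum f u b - fiberSum f v b‖ₑ ≤ fiberSum f (fun b' => ‖u b' - v b'‖ₑ) b := by
  have hsub := (hu.indicator {b' | f b' = f b}).tsum_sub (hv.indicator {b' | f b' = f b})
  rw [fiberSum, fiberSum, ← hsub]
  refine enorm_tsum_le_tsum_enorm.trans_eq (tsum_congr fun b' => ?_)
  rw [← congrFun (Set.indicator_sub _ u v) b', enorm_indicator_eq_indicator_enorm]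

theorem Summable.tsum_indicator_snd_eq_fiberSum {E : Type*} [NormedAddCommGroup E]
    [CompleteSpace E] {r : α × β → E} (hr : Summable r) (b : β) :
    ∑' p, {p : α × β | f p.2 = f b}.indicator r p = fiberSum f (fun b' => ∑' a, r (a, b')) b := by
  have hind := hr.indicator {p : α × β | f p.2 = f b}
  rw [hind.tsum_prod,
    ← hind.tsum_comm (f := fun a b' => {p : α × β | f p.2 = f b}.indicator r (a, b'))]
  refine tsum_congr fun b' => ?_
  by_cases hb : f b' = f b <;> simp [hb]

namespace ENNReal

theorem ofReal_fiberSum {w : β → ℝ} (hw : ∀ b, 0 ≤ w b) (hs : Summable w) (b : β) :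
    ENNReal.ofReal (fiberSum f w b) = fiberSum f (fun b' => ENNReal.ofReal (w b')) b := by
  rw [fiberSum, ENNReal.ofReal_tsum_of_nonneg
    (fun b' => Set.indicator_nonneg (fun b' _ => hw b') b') (hs.indicator _)]
  exact tsum_congr fun b' =>
    (congrFun (Set.indicator_comp_of_zero (g := ENNReal.ofReal) ENNReal.ofReal_zero) b').symm

theorem tsum_mul_fiberSum_comm (g h : β → ℝ≥0∞) :
    ∑' b, g b * fiberSum f h b = ∑' b, fiberSum f g b * h b := by
  simp only [fiberSum, ← ENNReal.tsum_mul_left, ← ENNReal.tsum_mul_right]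
  rw [ENNReal.tsum_comm]
  refine tsum_congr fun b => tsum_congr fun b' => ?_
  by_cases hb : f b = f b' <;> simp [hb, eq_comm]

theorem fiberSum_div_fiberSum_le_one (w : β → ℝ≥0∞) (b : β) :
    fiberSum f (fun b' => w b' / fiberSum f w b') b ≤ 1 := by
  calc fiberSum f (fun b' => w b' / fiberSum f w b') b
      = fiberSum f (fun b' => w b' / fiberSum f w b) b := by
        refine tsum_congr fun b' => ?_
        by_cases hb : f b' = f b
        · simp only [Set.indicator_of_mem (show b' ∈ {b' | f b' = f b} from hb),
            fiberSum_congr f w hb]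
        · simp only [Set.indicator_of_notMem (show b' ∉ {b' | f b' = f b} from hb)]
    _ = fiberSum f w b / fiberSum f w b := by
        simp only [fiberSum, div_eq_mul_inv, Set.indicator_mul_left, ENNReal.tsum_mul_right]
    _ ≤ 1 := ENNReal.div_self_le_one

theorem tsum_div_fiberSum_mul_fiberSum_le (w h : β → ℝ≥0∞) :
    ∑' b, w b / fiberSum f w b * fiberSum f h b ≤ ∑' b, h b := by
  rw [tsum_mul_fiberSum_comm]
  exact ENNReal.tsum_le_tsum fun b =>
    mul_le_of_le_one_left zero_le (fiberSum_div_fiberSum_le_one f w b)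

end ENNReal

end fiberSum

theorem enorm_mul_div_sub_mul_le {x q n m : ℝ} (hx : 0 ≤ x) (hxq : x ≤ q) :
    ‖x * (n / q) - x * m‖ₑ ≤ ENNReal.ofReal x / ENNReal.ofReal q * ‖n - q * m‖ₑ := by
  rcases (hx.trans hxq).eq_or_lt with hq | hq
  · obtain rfl : x = 0 := le_antisymm (hq ▸ hxq) hx
    simp
  · have hfactor : x * (n / q) - x * m = x / q * (n - q * m) := by
      field_simp
    rw [hfactor, enorm_mul, Real.enorm_eq_ofReal (div_nonneg hx hq.le),
      ENNReal.ofReal_div_of_pos hq]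

theorem tsum_abs_le_of_tsum_enorm_le {ι κ : Type*} {x : ι → ℝ} {y : κ → ℝ} (hy : Summable y)
    (h : ∑' i, ‖x i‖ₑ ≤ ∑' k, ‖y k‖ₑ) : ∑' i, |x i| ≤ ∑' k, |y k| := by
  simp only [← Real.norm_eq_abs, ← toReal_enorm]
  rw [← ENNReal.tsum_toReal_eq fun _ => enorm_ne_top,
    ← ENNReal.tsum_toReal_eq fun _ => enorm_ne_top]
  exact ENNReal.toReal_mono (tsum_enorm_ne_top_iff_summable_norm.2 hy.norm) h

theorem tsum_enorm_resample_sub_le {α β γ : Type*} {r : α × β → ℝ} (hr₀ : ∀ p, 0 ≤ r p)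
    (hr : Summable r) (f : β → γ) :
    ∑' ba : β × α, ‖(∑' a, r (a, ba.1)) *
        (fiberSum f (fun b => r (ba.2, b)) ba.1 / fiberSum f (fun b => ∑' a, r (a, b)) ba.1) -
        (∑' a, r (a, ba.1)) * ∑' b, r (ba.2, b)‖ₑ ≤
      ∑' p : α × β, ‖r p - (∑' b, r (p.1, b)) * ∑' a, r (a, p.2)‖ₑ := by
  set r₁ : α → ℝ := fun a => ∑' b, r (a, b)
  set r₂ : β → ℝ := fun b => ∑' a, r (a, b)
  have hr₂₀ : ∀ b, 0 ≤ r₂ b := fun b => tsum_nonneg fun a => hr₀ (a, b)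
  have hr₂ : Summable r₂ := hr.prod_symm.prod
  set dev : α → β → ℝ≥0∞ := fun a b => ‖r (a, b) - r₁ a * r₂ b‖ₑ
  have pointwise : ∀ b a, ‖r₂ b * (fiberSum f (fun b' => r (a, b')) b / fiberSum f r₂ b) -
      r₂ b * r₁ a‖ₑ ≤
        ENNReal.ofReal (r₂ b) / fiberSum f (fun b' => ENNReal.ofReal (r₂ b')) b *
          fiberSum f (dev a) b := by
    intro b a
    refine (enorm_mul_div_sub_mul_le (hr₂₀ b) (le_fiberSum f hr₂₀ hr₂ b)).trans ?_
    rw [ENNReal.ofReal_fiberSum f hr₂₀ hr₂]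
    gcongr
    have hmul : fiberSum f r₂ b * r₁ a = fiberSum f (fun b' => r₁ a * r₂ b') b := by
      rw [mul_comm, fiberSum, fiberSum, ← tsum_mul_left]
      simp only [Set.indicator_mul_right]
    rw [hmul]
    exact enorm_fiberSum_sub_le f (hr.prod_factor a) (hr₂.mul_left (r₁ a)) b
  calc _ ≤ ∑' ba : β × α, ENNReal.ofReal (r₂ ba.1) /
          fiberSum f (fun b' => ENNReal.ofReal (r₂ b')) ba.1 * fiberSum f (dev ba.2) ba.1 :=
        ENNReal.tsum_le_tsum fun ba => pointwise ba.1 ba.2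
    _ = ∑' a, ∑' b, ENNReal.ofReal (r₂ b) /
          fiberSum f (fun b' => ENNReal.ofReal (r₂ b')) b * fiberSum f (dev a) b := by
        rw [ENNReal.tsum_prod', ENNReal.tsum_comm]
    _ ≤ ∑' a, ∑' b, dev a b := ENNReal.tsum_le_tsum fun a =>
        ENNReal.tsum_div_fiberSum_mul_fiberSum_le f _ (dev a)
    _ = _ := ENNReal.tsum_prod.symm

theorem sd_resample_given_leakage_general {SA SB C : Type*}
    (r : SA × SB → ℝ) (hr : IsPMF r) (ε : ℝ)
    (h : SD r (fun ab => (∑' b, r (ab.1, b)) * (∑' a, r (a, ab.2))) ≤ ε)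
    (f : SB → C) :
    SD (fun ba : SB × SA =>
          (∑' a, r (a, ba.1)) *
            ((∑' b, {b' : SB | f b' = f ba.1}.indicator (fun b' => r (ba.2, b')) b) /
             (∑' ab, {ab' : SA × SB | f ab'.2 = f ba.1}.indicator r ab)))
       (fun ba : SB × SA => (∑' a, r (a, ba.1)) * (∑' b, r (ba.2, b))) ≤ ε := by
  obtain ⟨hr₀, hr₁⟩ := hr
  have hr := hr₁.summable
  have hmarginals : Summable fun p : SA × SB => (∑' b, r (p.1, b)) * ∑' a, r (a, p.2) :=
    hr.prod.mul_of_nonneg hr.prod_symm.prod (fun a => tsum_nonneg fun b => hr₀ (a, b))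
      (fun b => tsum_nonneg fun a => hr₀ (a, b))
  refine le_trans ?_ h
  unfold SD
  simp only [hr.tsum_indicator_snd_eq_fiberSum f]
  exact mul_le_mul_of_nonneg_left
    (tsum_abs_le_of_tsum_enorm_le (hr.sub hmarginals) (tsum_enorm_resample_sub_le hr₀ hr f))
    one_half_pos.le

/-- deterministic case of Lemma `stillProd`: let `r` be a joint pmf of
`(a, b)` on `SA × SB`, `ε`-close to the product of its marginals `r₁ ⊗ r₂`.  For a
deterministic leakage `f : SB → C`, define `r'(b, a') = r₂(b) · π_{f(b)}(a')`, where
`π_c(a')` is the `r`-probability that the `a`-component equals `a'` conditioned on `f` of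
the `b`-component being `c`.  Then `SD(r', r₂ ⊗ r₁) ≤ ε`. -/
theorem sd_resample_given_leakage {SA SB C : Type*} [Countable SA] [Countable SB]
    (r : SA × SB → ℝ) (hr : IsPMF r) (ε : ℝ)
    (h : SD r (fun ab => (∑' b, r (ab.1, b)) * (∑' a, r (a, ab.2))) ≤ ε)
    (f : SB → C) :
    SD (fun ba : SB × SA =>
          (∑' a, r (a, ba.1)) *
            ((∑' b, {b' : SB | f b' = f ba.1}.indicator (fun b' => r (ba.2, b')) b) /
             (∑' ab, {ab' : SA × SB | f ab'.2 = f ba.1}.indicator r ab)))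
       (fun ba : SB × SA => (∑' a, r (a, ba.1)) * (∑' b, r (ba.2, b))) ≤ ε :=
  sd_resample_given_leakage_general r hr ε h f
end

section
/- Let r be a probability mass function on S_A × S_B (a joint distribution of random variables a and b) with marginals r₁ on S_A and r₂ on S_B, and suppose SD(r, r₁ ⊗ r₂) ≤ ε. Let ρ be a pmf on a countable set R, sampled independently of (a, b), and let f : S_B × R → C be a function (a randomized function of b with random tape drawn from ρ). Define a new joint pmf r' on S_B × S_A by: sample (b, rnd) from r₂ ⊗ ρ, compute c = f(b, rnd), and sample a' from the conditional distribution of the a-component of r given the event that f applied to the b-component (with an independent tape from ρ) equals c; output (b, a'). Then SD(r', r₂ ⊗ r₁) ≤ ε. -/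
/-! Conditioned on the leaked value `c`, the resampled `a'` has law `P(a, c) / P(c)`, so the
deviation of `r'` from the product at `(b, a)` factors as `r₂(b) / P(c) · (P(a, c) − r₁(a) P(c))`.
Over the fiber of `c` the weights `r₂(b) / P(c)` sum to at most one, while `|P(a, c) − r₁(a) P(c)|`
is at most the mass of `|r − r₁ ⊗ r₂|` on that fiber; summing over `c` gives `SD(r, r₁ ⊗ r₂)`.
A random tape is handled by leaking the pair `(b, rnd)` of the joint law `r ⊗ ρ`, which is as far
from the product of its marginals as `r` is, and then forgetting `rnd`, which cannot increase the
distance. -/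

open scoped ENNReal

noncomputable def fiberMass {Y C : Type*} (p : Y → ℝ) (g : Y → C) (c : C) : ℝ :=
  ∑' y, {y' | g y' = c}.indicator p y

theorem enorm_tsum_sub_tsum_le {ι E : Type*} [NormedAddCommGroup E] [CompleteSpace E]
    {u v : ι → E} (hv : Summable v) :
    ‖∑' i, u i - ∑' i, v i‖ₑ ≤ ∑' i, ‖u i - v i‖ₑ := by
  by_cases hu : Summable u
  · rw [← hu.tsum_sub hv]
    exact enorm_tsum_le_tsum_enorm
  · suffices ∑' i, ‖u i - v i‖ₑ = ∞ by simp [this]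
    by_contra h
    have huv : Summable fun i => u i - v i :=
      .of_norm (tsum_enorm_ne_top_iff_summable_norm.mp h)
    exact hu (by simpa using huv.add hv)

theorem SD_eq_toReal_tsum_enorm {S : Type*} (p q : S → ℝ) :
    SD p q = 1 / 2 * (∑' s, ‖p s - q s‖ₑ).toReal := by
  simp [SD, ENNReal.tsum_toReal_eq fun _ => enorm_ne_top, Real.norm_eq_abs]

theorem IsPMF.tsum_enorm_eq_one {S : Type*} {p : S → ℝ} (hp : IsPMF p) : ∑' s, ‖p s‖ₑ = 1 := by
  simp_rw [Real.enorm_of_nonneg (hp.1 _)]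
  rw [← ENNReal.ofReal_tsum_of_nonneg hp.1 hp.2.summable, hp.2.tsum_eq, ENNReal.ofReal_one]

theorem mul_div_sub_mul_eq {a n d b : ℝ} (h : d = 0 → a = 0) :
    a * (n / d) - a * b = a / d * (n - b * d) := by
  rcases eq_or_ne d 0 with hd | hd
  · simp [hd, h hd]
  · field_simp

section fiberMass

variable {Y C : Type*} {p : Y → ℝ} (g : Y → C)

theorem apply_eq_zero_of_fiberMass_eq_zero (hp0 : ∀ y, 0 ≤ p y) (hp : Summable p) {y : Y}
    (hy : fiberMass p g (g y) = 0) : p y = 0 := by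
  refine le_antisymm ?_ (hp0 y)
  calc p y = {y' | g y' = g y}.indicator p y := by simp
    _ ≤ fiberMass p g (g y) :=
      (hp.indicator _).le_tsum y fun _ _ => Set.indicator_nonneg (fun _ _ => hp0 _) _
    _ = 0 := hy

theorem tsum_enorm_div_fiberMass_le_one (hp0 : ∀ y, 0 ≤ p y) (hp : Summable p) (c : C) :
    ∑' y : g ⁻¹' {c}, ‖p y / fiberMass p g c‖ₑ ≤ 1 := by
  have hsum : ∑' y : g ⁻¹' {c}, p y / fiberMass p g c = fiberMass p g c / fiberMass p g c := by
    rw [tsum_div_const, tsum_subtype]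
    rfl
  have hD : 0 ≤ fiberMass p g c := tsum_nonneg fun _ => Set.indicator_nonneg (fun _ _ => hp0 _) _
  simp_rw [Real.enorm_of_nonneg (div_nonneg (hp0 _) hD)]
  rw [← ENNReal.ofReal_tsum_of_nonneg (fun _ => div_nonneg (hp0 _) hD)
    ((hp.subtype _).div_const _), hsum]
  exact ENNReal.ofReal_le_one.mpr (div_self_le_one _)

theorem tsum_indicator_snd_eq_fiberMass {X : Type*} {s : X × Y → ℝ} (hs : Summable s) (c : C) :
    ∑' xy, {xy' : X × Y | g xy'.2 = c}.indicator s xy =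
      fiberMass (fun y => ∑' x, s (x, y)) g c := by
  rw [← (Equiv.prodComm Y X).tsum_eq]
  simp only [Equiv.prodComm_apply]
  rw [(hs.indicator _).prod_symm.tsum_prod, fiberMass]
  refine tsum_congr fun y => ?_
  by_cases hy : g y = c <;> simp [hy]

end fiberMass

theorem tsum_enorm_fiberMass_sub_le {X Y C : Type*} (s : X × Y → ℝ) (p₁ : X → ℝ) {p₂ : Y → ℝ}
    (hp : Summable p₂) (g : Y → C) (c : C) :
    ∑' x, ‖fiberMass (fun y => s (x, y)) g c - p₁ x * fiberMass p₂ g c‖ₑ ≤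
      ∑' x, ∑' y : g ⁻¹' {c}, ‖s (x, y) - p₁ x * p₂ y‖ₑ := by
  refine ENNReal.tsum_le_tsum fun x => ?_
  rw [fiberMass, fiberMass, ← tsum_mul_left]
  refine (enorm_tsum_sub_tsum_le ((hp.indicator _).mul_left _)).trans_eq ?_
  rw [tsum_subtype (g ⁻¹' {c}) fun y => ‖s (x, y) - p₁ x * p₂ y‖ₑ]
  refine tsum_congr fun y => ?_
  by_cases hy : g y = c <;> simp [hy]

theorem tsum_enorm_resample_sub_le_s3 {X Y C : Type*} (s : X × Y → ℝ) (p₁ : X → ℝ) {p₂ : Y → ℝ}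
    (hp0 : ∀ y, 0 ≤ p₂ y) (hp : Summable p₂) (g : Y → C) :
    ∑' yx : Y × X, ‖p₂ yx.1 * (fiberMass (fun y => s (yx.2, y)) g (g yx.1) /
        fiberMass p₂ g (g yx.1)) - p₂ yx.1 * p₁ yx.2‖ₑ ≤
      ∑' xy : X × Y, ‖s xy - p₁ xy.1 * p₂ xy.2‖ₑ := by
  set D := fiberMass p₂ g
  set T : C → ℝ≥0∞ := fun c => ∑' x, ‖fiberMass (fun y => s (x, y)) g c - p₁ x * D c‖ₑ
  have hfactor : ∀ y x, ‖p₂ y * (fiberMass (fun y => s (x, y)) g (g y) / D (g y)) - p₂ y * p₁ x‖ₑ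
      = ‖p₂ y / D (g y)‖ₑ * ‖fiberMass (fun y => s (x, y)) g (g y) - p₁ x * D (g y)‖ₑ := by
    intro y x
    rw [← enorm_mul, mul_div_sub_mul_eq (apply_eq_zero_of_fiberMass_eq_zero g hp0 hp)]
  calc _ = ∑' y, ‖p₂ y / D (g y)‖ₑ * T (g y) := by
        simp only [ENNReal.tsum_prod', hfactor, ENNReal.tsum_mul_left, T]
    _ = ∑' c, (∑' y : g ⁻¹' {c}, ‖p₂ y / D c‖ₑ) * T c := by
        rw [← ENNReal.tsum_fiberwise _ g]
        refine tsum_congr fun c => ?_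
        rw [← ENNReal.tsum_mul_right]
        refine tsum_congr fun ⟨y, hy⟩ => ?_
        rw [show g y = c from hy]
    _ ≤ ∑' c, T c :=
        ENNReal.tsum_le_tsum fun c =>
          mul_le_of_le_one_left' (tsum_enorm_div_fiberMass_le_one g hp0 hp c)
    _ ≤ ∑' c, ∑' x, ∑' y : g ⁻¹' {c}, ‖s (x, y) - p₁ x * p₂ y‖ₑ :=
        ENNReal.tsum_le_tsum fun c => tsum_enorm_fiberMass_sub_le s p₁ hp g c
    _ = _ := by
        rw [ENNReal.tsum_comm, ENNReal.tsum_prod']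
        exact tsum_congr fun x => ENNReal.tsum_fiberwise (fun y => ‖s (x, y) - p₁ x * p₂ y‖ₑ) g

theorem tsum_enorm_mul_pmf {X R : Type*} (u : X → ℝ) {ρ : R → ℝ} (hρ : IsPMF ρ) :
    ∑' xt : X × R, ‖u xt.1 * ρ xt.2‖ₑ = ∑' x, ‖u x‖ₑ := by
  simp only [ENNReal.tsum_prod', enorm_mul, ENNReal.tsum_mul_left, hρ.tsum_enorm_eq_one, mul_one]

theorem tsum_enorm_resample_tape_sub_le {SA SB R C : Type*} (r : SA × SB → ℝ) (q₁ : SA → ℝ)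
    {q₂ : SB → ℝ} (hq0 : ∀ b, 0 ≤ q₂ b) (hq : Summable q₂) {ρ : R → ℝ} (hρ : IsPMF ρ)
    (f : SB × R → C) :
    ∑' ba : SB × SA, ‖∑' t, q₂ ba.1 * ρ t *
        (fiberMass (fun y => r (ba.2, y.1) * ρ y.2) f (f (ba.1, t)) /
          fiberMass (fun y => q₂ y.1 * ρ y.2) f (f (ba.1, t))) - q₂ ba.1 * q₁ ba.2‖ₑ ≤
      ∑' ab : SA × SB, ‖r ab - q₁ ab.1 * q₂ ab.2‖ₑ := by
  have hp0 : ∀ y : SB × R, 0 ≤ q₂ y.1 * ρ y.2 := fun y => mul_nonneg (hq0 _) (hρ.1 _)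
  have hp : Summable fun y : SB × R => q₂ y.1 * ρ y.2 :=
    hq.mul_of_nonneg hρ.2.summable hq0 hρ.1
  have hmarg : ∀ b a, q₂ b * q₁ a = ∑' t, q₂ b * ρ t * q₁ a := fun b a => by
    rw [tsum_mul_right, tsum_mul_left, hρ.2.tsum_eq, mul_one]
  calc _ ≤ ∑' ba : SB × SA, ∑' t, ‖q₂ ba.1 * ρ t * (fiberMass (fun y => r (ba.2, y.1) * ρ y.2) f
          (f (ba.1, t)) / fiberMass (fun y => q₂ y.1 * ρ y.2) f (f (ba.1, t))) -
            q₂ ba.1 * ρ t * q₁ ba.2‖ₑ :=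
        ENNReal.tsum_le_tsum fun ba => by
          rw [hmarg]
          exact enorm_tsum_sub_tsum_le ((hρ.2.summable.mul_left _).mul_right _)
    _ = ∑' yx : (SB × R) × SA, ‖q₂ yx.1.1 * ρ yx.1.2 * (fiberMass (fun y => r (yx.2, y.1) * ρ y.2) f
          (f yx.1) / fiberMass (fun y => q₂ y.1 * ρ y.2) f (f yx.1)) -
            q₂ yx.1.1 * ρ yx.1.2 * q₁ yx.2‖ₑ := by
        simp only [ENNReal.tsum_prod']
        exact tsum_congr fun b => ENNReal.tsum_comm
    _ ≤ ∑' xy : SA × (SB × R), ‖r (xy.1, xy.2.1) * ρ xy.2.2 - q₁ xy.1 * (q₂ xy.2.1 * ρ xy.2.2)‖ₑ :=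
        tsum_enorm_resample_sub_le_s3 (fun xy => r (xy.1, xy.2.1) * ρ xy.2.2) q₁
          (p₂ := fun y => q₂ y.1 * ρ y.2) hp0 hp f
    _ = ∑' xy : (SA × SB) × R, ‖(r xy.1 - q₁ xy.1.1 * q₂ xy.1.2) * ρ xy.2‖ₑ := by
        rw [← (Equiv.prodAssoc SA SB R).tsum_eq]
        exact tsum_congr fun xy => by simp only [Equiv.prodAssoc_apply]; ring_nf
    _ = _ := tsum_enorm_mul_pmf (fun ab : SA × SB => r ab - q₁ ab.1 * q₂ ab.2) hρ

theorem sd_resample_given_randomized_leakage_general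
    {SA SB R C : Type*}
    (r : SA × SB → ℝ) (hr : IsPMF r)
    (ρ : R → ℝ) (hρ : IsPMF ρ) (ε : ℝ)
    (h : SD r (fun ab => (∑' b, r (ab.1, b)) * (∑' a, r (a, ab.2))) ≤ ε)
    (f : SB × R → C) :
    SD (fun ba : SB × SA =>
          ∑' rnd : R,
            (∑' a, r (a, ba.1)) * ρ rnd *
              ((∑' p, {p' : SB × R | f p' = f (ba.1, rnd)}.indicator
                  (fun p' => r (ba.2, p'.1) * ρ p'.2) p) /
               (∑' q, {q' : (SA × SB) × R | f (q'.1.2, q'.2) = f (ba.1, rnd)}.indicator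
                  (fun q' => r q'.1 * ρ q'.2) q)))
       (fun ba : SB × SA => (∑' a, r (a, ba.1)) * (∑' b, r (ba.2, b))) ≤ ε := by
  have hr₁ : Summable fun a => ∑' b, r (a, b) := hr.2.summable.prod
  have hr₂ : Summable fun b => ∑' a, r (a, b) := hr.2.summable.prod_symm.prod
  have hr₂0 : ∀ b, 0 ≤ ∑' a, r (a, b) := fun b => tsum_nonneg fun a => hr.1 _
  have hrρ : Summable fun x : SA × (SB × R) => r (x.1, x.2.1) * ρ x.2.2 :=
    (Equiv.prodAssoc SA SB R).symm.summable_iff.mpr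
      (hr.2.summable.mul_of_nonneg hρ.2.summable hr.1 hρ.1)
  have hD : ∀ c, ∑' q, {q' : (SA × SB) × R | f (q'.1.2, q'.2) = c}.indicator
      (fun q' => r q'.1 * ρ q'.2) q = fiberMass (fun y => (∑' a, r (a, y.1)) * ρ y.2) f c := by
    intro c
    rw [← (Equiv.prodAssoc SA SB R).symm.tsum_eq]
    exact (tsum_indicator_snd_eq_fiberMass f hrρ c).trans (by simp only [tsum_mul_right])
  have hfin : ∑' ab : SA × SB, ‖r ab - (∑' b, r (ab.1, b)) * (∑' a, r (a, ab.2))‖ₑ ≠ ∞ :=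
    tsum_enorm_ne_top_iff_summable_norm.mpr
      (hr.2.summable.sub (hr₁.mul_of_nonneg hr₂ (fun a => tsum_nonneg fun b => hr.1 _) hr₂0)).norm
  simp only [hD]
  rw [SD_eq_toReal_tsum_enorm] at h ⊢
  refine le_trans (mul_le_mul_of_nonneg_left (ENNReal.toReal_mono hfin ?_) (by norm_num)) h
  exact tsum_enorm_resample_tape_sub_le r (fun a => ∑' b, r (a, b)) hr₂0 hr₂ hρ f

/-- Lemma `stillProd`, randomized leakage: let `r` be a joint pmf of
`(a, b)` on `SA × SB`, `ε`-close to the product of its marginals `r₁ ⊗ r₂`, and let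
`ρ` be a pmf of an independent random tape on `R`.  For a randomized leakage
`f : SB × R → C`, define `r'` on `SB × SA` by sampling `(b, rnd) ← r₂ ⊗ ρ`, setting
`c = f(b, rnd)`, and sampling `a'` from the distribution of the `a`-component of `r`
conditioned on `f` applied to the `b`-component (with an independent tape from `ρ`)
equalling `c`.  Then `SD(r', r₂ ⊗ r₁) ≤ ε`. -/
theorem sd_resample_given_randomized_leakage
    {SA SB R C : Type*} [Countable SA] [Countable SB] [Countable R]
    (r : SA × SB → ℝ) (hr : IsPMF r)
    (ρ : R → ℝ) (hρ : IsPMF ρ) (ε : ℝ)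
    (h : SD r (fun ab => (∑' b, r (ab.1, b)) * (∑' a, r (a, ab.2))) ≤ ε)
    (f : SB × R → C) :
    SD (fun ba : SB × SA =>
          ∑' rnd : R,
            (∑' a, r (a, ba.1)) * ρ rnd *
              ((∑' p, {p' : SB × R | f p' = f (ba.1, rnd)}.indicator
                  (fun p' => r (ba.2, p'.1) * ρ p'.2) p) /
               (∑' q, {q' : (SA × SB) × R | f (q'.1.2, q'.2) = f (ba.1, rnd)}.indicator
                  (fun q' => r q'.1 * ρ q'.2) q)))
       (fun ba : SB × SA => (∑' a, r (a, ba.1)) * (∑' b, r (ba.2, b))) ≤ ε :=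
  sd_resample_given_randomized_leakage_general r hr ρ hρ ε h f
end

section
/- Let (Ω, P) be a finite probability space, let X ⊆ Ω be an event with P(X) > 0, let m_1, …, m_N : Ω → M be random variables, and let θ ∈ [0,1]. For ω ∈ Ω and i ≤ N write m^{(i)}(ω) = (m_1(ω), …, m_i(ω)). Let Bad = { ω ∈ Ω : ∃ i ≤ N such that P(m^{(i)} = m^{(i)}(ω)) > 0 and P(X | m^{(i)} = m^{(i)}(ω)) < θ }. Then P(X ∩ Bad) ≤ θ; equivalently, P(Bad | X) ≤ θ / P(X). -/
/-- Probability of an event `A` in a finite probability space with mass function `P`. -/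
noncomputable def Pr {Ω : Type*} [Fintype Ω] (P : Ω → ℝ) (A : Set Ω) : ℝ :=
  ∑ ω, A.indicator P ω

lemma Pr_eq_sum_filter {Ω : Type*} [Fintype Ω] (P : Ω → ℝ) (A : Set Ω)
    [DecidablePred (· ∈ A)] :
    Pr P A = ∑ ω ∈ Finset.univ.filter (· ∈ A), P ω := by
  rw [Pr, Finset.sum_filter]
  refine Finset.sum_congr rfl fun ω _ => ?_
  by_cases h : ω ∈ A <;> simp [Set.indicator_apply, h]

lemma aux_bad_le {Ω : Type*} [Fintype Ω] (P : Ω → ℝ)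
    (hP : ∀ ω, 0 ≤ P ω) (hsum : ∑ ω, P ω = 1)
    (X : Set Ω) (θ : ℝ) (hθ0 : 0 ≤ θ) (N : ℕ)
    (S : ℕ → Ω → Set Ω)
    (hmem : ∀ i ω, ω ∈ S i ω)
    (heq : ∀ i ω ω', ω' ∈ S i ω → S i ω' = S i ω)
    (hnest : ∀ i i' ω, i ≤ i' → S i' ω ⊆ S i ω) :
    Pr P (X ∩ {ω | ∃ i ≤ N, 0 < Pr P (S i ω) ∧
      Pr P (X ∩ S i ω) / Pr P (S i ω) < θ}) ≤ θ := by
  classical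
  set Bad : Set Ω := {ω | ∃ i ≤ N, 0 < Pr P (S i ω) ∧
      Pr P (X ∩ S i ω) / Pr P (S i ω) < θ} with hBadDef
  set Q : ℕ → Ω → Prop := fun i ω =>
    i ≤ N ∧ 0 < Pr P (S i ω) ∧ Pr P (X ∩ S i ω) / Pr P (S i ω) < θ with hQdef
  have hBadQ : ∀ ω, ω ∈ Bad ↔ ∃ i, Q i ω := by
    intro ω
    constructor
    · rintro ⟨i, hi, h⟩; exact ⟨i, hi, h⟩
    · rintro ⟨i, hi, h⟩; exact ⟨i, hi, h⟩
  let idx : Ω → ℕ := fun ω => if h : ∃ i, Q i ω then Nat.find h else 0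
  have hidx_spec : ∀ ω ∈ Bad, Q (idx ω) ω := by
    intro ω hω
    have h : ∃ i, Q i ω := (hBadQ ω).mp hω
    simp only [idx, dif_pos h]
    exact Nat.find_spec h
  have hidx_min : ∀ ω ∈ Bad, ∀ k, Q k ω → idx ω ≤ k := by
    intro ω hω k hk
    have h : ∃ i, Q i ω := (hBadQ ω).mp hω
    simp only [idx, dif_pos h]
    exact Nat.find_min' h hk
  -- key: cells at first bad time are equal or disjoint
  have half : ∀ ω1 ∈ Bad, ∀ ω2 ∈ Bad, idx ω1 ≤ idx ω2 → ∀ ω'',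
      ω'' ∈ S (idx ω1) ω1 → ω'' ∈ S (idx ω2) ω2 →
      S (idx ω1) ω1 = S (idx ω2) ω2 := by
    intro ω1 h1 ω2 h2 hle ω'' hin1 hin2
    have e1 : S (idx ω1) ω'' = S (idx ω1) ω1 := heq _ _ _ hin1
    have hin2' : ω'' ∈ S (idx ω1) ω2 := hnest _ _ _ hle hin2
    have e2 : S (idx ω1) ω'' = S (idx ω1) ω2 := heq _ _ _ hin2'
    have e12 : S (idx ω1) ω2 = S (idx ω1) ω1 := by rw [← e2, e1]
    have hQQ : Q (idx ω1) ω2 := by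
      show idx ω1 ≤ N ∧ 0 < Pr P (S (idx ω1) ω2) ∧
        Pr P (X ∩ S (idx ω1) ω2) / Pr P (S (idx ω1) ω2) < θ
      rw [e12]
      exact hidx_spec ω1 h1
    have hle2 : idx ω2 ≤ idx ω1 := hidx_min ω2 h2 _ hQQ
    have heqi : idx ω1 = idx ω2 := le_antisymm hle hle2
    rw [← e12, heqi]
  have key : ∀ ω1 ∈ Bad, ∀ ω2 ∈ Bad,
      S (idx ω1) ω1 ≠ S (idx ω2) ω2 →
      Disjoint (S (idx ω1) ω1) (S (idx ω2) ω2) := by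
    intro ω1 h1 ω2 h2 hne
    rw [Set.disjoint_left]
    intro ω'' hin1 hin2
    rcases le_total (idx ω1) (idx ω2) with h | h
    · exact hne (half ω1 h1 ω2 h2 h ω'' hin1 hin2)
    · exact hne ((half ω2 h2 ω1 h1 h ω'' hin2 hin1).symm)
  -- the finite set of cells
  set cells : Finset (Set Ω) :=
    (Finset.univ.filter (· ∈ Bad)).image (fun ω => S (idx ω) ω) with hcells
  have cells_mem : ∀ C ∈ cells, ∃ ω ∈ Bad, C = S (idx ω) ω := by
    intro C hC
    rw [hcells, Finset.mem_image] at hC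
    obtain ⟨ω, hω, hCeq⟩ := hC
    exact ⟨ω, (Finset.mem_filter.mp hω).2, hCeq.symm⟩
  have cells_disj : ∀ C1 ∈ cells, ∀ C2 ∈ cells, C1 ≠ C2 → Disjoint C1 C2 := by
    intro C1 hC1 C2 hC2 hne
    obtain ⟨ω1, h1, rfl⟩ := cells_mem C1 hC1
    obtain ⟨ω2, h2, rfl⟩ := cells_mem C2 hC2
    exact key ω1 h1 ω2 h2 hne
  -- Finset versions
  have fin_disj : ∀ Y : Set Ω, (↑cells : Set (Set Ω)).Pairwise fun C1 C2 =>
      Disjoint (Finset.univ.filter (· ∈ Y ∩ C1)) (Finset.univ.filter (· ∈ Y ∩ C2)) := by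
    intro Y C1 hC1 C2 hC2 hne
    rw [Finset.disjoint_left]
    intro a ha1 ha2
    simp only [Finset.mem_filter, Set.mem_inter_iff] at ha1 ha2
    exact Set.disjoint_left.mp
      (cells_disj C1 (Finset.mem_coe.mp hC1) C2 (Finset.mem_coe.mp hC2) hne)
      ha1.2.2 ha2.2.2
  have sum_cells_le_one : ∑ C ∈ cells, Pr P C ≤ 1 := by
    have fin_disj' : (↑cells : Set (Set Ω)).Pairwise fun C1 C2 =>
        Disjoint (Finset.univ.filter (· ∈ C1)) (Finset.univ.filter (· ∈ C2)) := by
      have := fin_disj Set.univ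
      simpa using this
    calc ∑ C ∈ cells, Pr P C
        = ∑ C ∈ cells, ∑ ω ∈ Finset.univ.filter (· ∈ C), P ω := by
          exact Finset.sum_congr rfl fun C _ => Pr_eq_sum_filter P C
      _ = ∑ ω ∈ cells.biUnion (fun C => Finset.univ.filter (· ∈ C)), P ω :=
          (Finset.sum_biUnion fin_disj').symm
      _ ≤ ∑ ω, P ω := Finset.sum_le_sum_of_subset_of_nonneg
          (Finset.subset_univ _) (fun ω _ _ => hP ω)
      _ = 1 := hsum
  have sub : Finset.univ.filter (· ∈ X ∩ Bad) ⊆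
      cells.biUnion (fun C => Finset.univ.filter (· ∈ X ∩ C)) := by
    intro ω hω
    simp only [Finset.mem_filter, Set.mem_inter_iff] at hω
    obtain ⟨-, hXω, hBω⟩ := hω
    refine Finset.mem_biUnion.mpr ⟨S (idx ω) ω, ?_, ?_⟩
    · rw [hcells, Finset.mem_image]
      exact ⟨ω, Finset.mem_filter.mpr ⟨Finset.mem_univ ω, hBω⟩, rfl⟩
    · simp only [Finset.mem_filter, Set.mem_inter_iff]
      exact ⟨Finset.mem_univ ω, hXω, hmem _ ω⟩
  have cell_bound : ∀ C ∈ cells, Pr P (X ∩ C) ≤ θ * Pr P C := by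
    intro C hC
    obtain ⟨ω, hω, rfl⟩ := cells_mem C hC
    obtain ⟨-, hpos, hlt⟩ := hidx_spec ω hω
    have := (div_lt_iff₀ hpos).mp hlt
    linarith
  calc Pr P (X ∩ Bad)
      = ∑ ω ∈ Finset.univ.filter (· ∈ X ∩ Bad), P ω := Pr_eq_sum_filter P _
    _ ≤ ∑ ω ∈ cells.biUnion (fun C => Finset.univ.filter (· ∈ X ∩ C)), P ω :=
        Finset.sum_le_sum_of_subset_of_nonneg sub (fun ω _ _ => hP ω)
    _ = ∑ C ∈ cells, ∑ ω ∈ Finset.univ.filter (· ∈ X ∩ C), P ω :=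
        Finset.sum_biUnion (fin_disj X)
    _ = ∑ C ∈ cells, Pr P (X ∩ C) :=
        Finset.sum_congr rfl fun C _ => (Pr_eq_sum_filter P _).symm
    _ ≤ ∑ C ∈ cells, θ * Pr P C := Finset.sum_le_sum cell_bound
    _ = θ * ∑ C ∈ cells, Pr P C := by rw [Finset.mul_sum]
    _ ≤ θ * 1 := by
        apply mul_le_mul_of_nonneg_left sum_cells_le_one hθ0
    _ = θ := mul_one θ

/-- likelihood martingale, Lemma `inverse`: during the revelation of
the sequence `m_1, …, m_N`, the probability that `X` occurs while the conditional
probability of `X` given the revealed prefix drops below `θ` at some point is at most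
`θ`; equivalently `P(Bad | X) ≤ θ / P(X)`. -/
theorem prob_event_and_unlikely_le {Ω M : Type*} [Fintype Ω] (P : Ω → ℝ)
    (hP : ∀ ω, 0 ≤ P ω) (hsum : ∑ ω, P ω = 1)
    (X : Set Ω) (hX : 0 < Pr P X)
    (N : ℕ) (m : Fin N → Ω → M) (θ : ℝ) (hθ0 : 0 ≤ θ) (hθ1 : θ ≤ 1) :
    Pr P (X ∩ {ω | ∃ i ≤ N,
        0 < Pr P {ω' | ∀ j : Fin N, (j : ℕ) < i → m j ω' = m j ω} ∧
        Pr P (X ∩ {ω' | ∀ j : Fin N, (j : ℕ) < i → m j ω' = m j ω}) /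
          Pr P {ω' | ∀ j : Fin N, (j : ℕ) < i → m j ω' = m j ω} < θ}) ≤ θ ∧
    Pr P ({ω | ∃ i ≤ N,
        0 < Pr P {ω' | ∀ j : Fin N, (j : ℕ) < i → m j ω' = m j ω} ∧
        Pr P (X ∩ {ω' | ∀ j : Fin N, (j : ℕ) < i → m j ω' = m j ω}) /
          Pr P {ω' | ∀ j : Fin N, (j : ℕ) < i → m j ω' = m j ω} < θ} ∩ X) / Pr P X
      ≤ θ / Pr P X := by
  have h1 := aux_bad_le P hP hsum X θ hθ0 N
    (fun i ω => {ω' | ∀ j : Fin N, (j : ℕ) < i → m j ω' = m j ω})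
    (fun i ω => by intro j _; rfl)
    (by
      intro i ω ω' hω'
      ext ω''
      constructor
      · intro h j hj; rw [← hω' j hj]; exact h j hj
      · intro h j hj; rw [hω' j hj]; exact h j hj)
    (by
      intro i i' ω hle ω' hω' j hj
      exact hω' j (lt_of_lt_of_le hj hle))
  refine ⟨h1, ?_⟩
  rw [Set.inter_comm _ X]
  exact (div_le_div_iff_of_pos_right hX).mpr h1
end

section
/- Let (Ω, P) be a finite probability space on which random variables A : Ω → 𝒳 and B : Ω → 𝒴 (the inputs of Alice and Bob, chosen from an arbitrary joint distribution) and a sequence of random variables m_1, …, m_N : Ω → M (the successive views of a public query strategy Eve) are defined. Fix (x, y) with P(A = x, B = y) > 0 and θ ∈ [0,1]. Let Bad = { ω : ∃ i ≤ N such that P(A = x, B = y | m^{(i)} = m^{(i)}(ω)) < θ }, where m^{(i)}(ω) = (m_1(ω), …, m_i(ω)). Then P(Bad | A = x, B = y) ≤ θ / P(A = x, B = y). In particular, if (A, B) is uniformly distributed on the finite set 𝒳 × 𝒴, this probability is at most θ · |𝒳| · |𝒴|. -/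
lemma Pr_nonneg {Ω : Type*} [Fintype Ω] {P : Ω → ℝ} (hP : ∀ ω, 0 ≤ P ω) (A : Set Ω) :
    0 ≤ Pr P A :=
  Finset.sum_nonneg fun ω _ => Set.indicator_nonneg (fun ω _ => hP ω) ω

lemma Pr_mono {Ω : Type*} [Fintype Ω] {P : Ω → ℝ} (hP : ∀ ω, 0 ≤ P ω) {A B : Set Ω}
    (h : A ⊆ B) : Pr P A ≤ Pr P B :=
  Finset.sum_le_sum fun ω _ => Set.indicator_le_indicator_of_subset h (fun _ => hP _) _

lemma key {Ω M : Type*} [Fintype Ω] (P : Ω → ℝ) (hP : ∀ ω, 0 ≤ P ω)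
    (hsum : ∑ ω, P ω = 1) (E : Set Ω) (N : ℕ) (m : Fin N → Ω → M)
    (θ : ℝ) (hθ0 : 0 ≤ θ) :
    Pr P ({ω | ∃ i ≤ N,
        Pr P (E ∩ {ω' | ∀ j : Fin N, (j : ℕ) < i → m j ω' = m j ω}) /
          Pr P {ω' | ∀ j : Fin N, (j : ℕ) < i → m j ω' = m j ω} < θ}
        ∩ E) ≤ θ := by
  classical
  let V : ℕ → Ω → Set Ω := fun i ω => {ω' | ∀ j : Fin N, (j : ℕ) < i → m j ω' = m j ω}
  change Pr P ({ω | ∃ i ≤ N, Pr P (E ∩ V i ω) / Pr P (V i ω) < θ} ∩ E) ≤ θ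
  have Vrefl : ∀ i ω, ω ∈ V i ω := fun i ω j hj => rfl
  have Vcoh : ∀ {i j : ℕ} {ω ω' : Ω}, j ≤ i → ω' ∈ V i ω → V j ω' = V j ω := by
    intro i j ω ω' hji hmem
    ext ω''
    constructor <;> intro h l hl
    · exact (h l hl).trans (hmem l (lt_of_lt_of_le hl hji))
    · exact (h l hl).trans (hmem l (lt_of_lt_of_le hl hji)).symm
  -- shortest bad index (N+1 if none)
  let k : Ω → ℕ := fun ω =>
    if h : ∃ i, i ≤ N ∧ Pr P (E ∩ V i ω) / Pr P (V i ω) < θ then Nat.find h else N + 1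
  set Sset : Set Ω := {ω | ∃ i ≤ N, Pr P (E ∩ V i ω) / Pr P (V i ω) < θ} with hSset
  have kspec : ∀ {ω : Ω}, ω ∈ Sset →
      k ω ≤ N ∧ (Pr P (E ∩ V (k ω) ω) / Pr P (V (k ω) ω) < θ) ∧
        ∀ j < k ω, ¬(j ≤ N ∧ Pr P (E ∩ V j ω) / Pr P (V j ω) < θ) := by
    intro ω hω
    have h : ∃ i, i ≤ N ∧ Pr P (E ∩ V i ω) / Pr P (V i ω) < θ := hω
    have hk : k ω = Nat.find h := dif_pos h
    refine ⟨hk ▸ (Nat.find_spec h).1, hk ▸ (Nat.find_spec h).2, ?_⟩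
    intro j hj
    exact Nat.find_min h (hk ▸ hj)
  have kcell : ∀ ω ω', ω' ∈ V (k ω) ω → k ω' = k ω := by
    intro ω ω' hmem
    have badiff : ∀ j ≤ k ω,
        ((Pr P (E ∩ V j ω') / Pr P (V j ω') < θ) ↔
          (Pr P (E ∩ V j ω) / Pr P (V j ω) < θ)) := by
      intro j hj
      rw [Vcoh hj hmem]
    by_cases h : ω ∈ Sset
    · obtain ⟨hkN, hkbad, hkmin⟩ := kspec h
      have h' : ω' ∈ Sset := ⟨k ω, hkN, (badiff _ le_rfl).2 hkbad⟩
      obtain ⟨hkN', hkbad', hkmin'⟩ := kspec h'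
      rcases lt_trichotomy (k ω') (k ω) with hlt | heq | hgt
      · exact absurd ⟨hkN', (badiff _ hlt.le).1 hkbad'⟩ (hkmin _ hlt)
      · exact heq
      · exact absurd ⟨hkN, (badiff _ le_rfl).2 hkbad⟩ (hkmin' _ hgt)
    · have hk : k ω = N + 1 := dif_neg h
      have h' : ω' ∉ Sset := by
        rintro ⟨i, hiN, hbad⟩
        exact h ⟨i, hiN, (badiff i (by omega)).1 hbad⟩
      have hk' : k ω' = N + 1 := dif_neg h'
      rw [hk, hk']
  let f : Ω → Set Ω := fun ω => V (k ω) ω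
  have fiber : ∀ ω ω', f ω' = f ω ↔ ω' ∈ V (k ω) ω := by
    intro ω ω'
    constructor
    · intro h
      have := Vrefl (k ω') ω'
      rw [show V (k ω') ω' = V (k ω) ω from h] at this
      exact this
    · intro h
      have hk := kcell ω ω' h
      show V (k ω') ω' = V (k ω) ω
      rw [hk]
      exact Vcoh le_rfl h
  set s : Finset Ω := Finset.univ.filter (fun ω => ω ∈ Sset ∩ E) with hs
  set t : Finset (Set Ω) := Finset.univ.image f with ht
  calc Pr P (Sset ∩ E) = ∑ ω ∈ s, P ω := Pr_eq_sum_filter P _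
    _ = ∑ v ∈ t, ∑ ω ∈ s.filter (fun ω => f ω = v), P ω := by
        rw [Finset.sum_fiberwise_eq_sum_filter s t f P,
          Finset.filter_true_of_mem fun ω _ => Finset.mem_image_of_mem f (Finset.mem_univ ω)]
    _ ≤ ∑ v ∈ t, θ * ∑ ω ∈ Finset.univ.filter (fun ω => f ω = v), P ω := by
        refine Finset.sum_le_sum fun v hv => ?_
        by_cases hne : (s.filter (fun ω => f ω = v)).Nonempty
        · obtain ⟨ω₀, hω₀⟩ := hne
          rw [Finset.mem_filter] at hω₀
          obtain ⟨hω₀s, hω₀f⟩ := hω₀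
          rw [hs, Finset.mem_filter] at hω₀s
          have hω₀S : ω₀ ∈ Sset := hω₀s.2.1
          obtain ⟨hkN, hkbad, -⟩ := kspec hω₀S
          have hfib : ∀ ω, f ω = v ↔ ω ∈ V (k ω₀) ω₀ := by
            intro ω; rw [← hω₀f]; exact fiber ω₀ ω
          have h1 : s.filter (fun ω => f ω = v)
              = Finset.univ.filter (fun ω => ω ∈ E ∩ V (k ω₀) ω₀) := by
            ext ω
            simp only [hs, Finset.mem_filter, Finset.mem_univ, true_and, hfib,
              Set.mem_inter_iff]
            constructor
            · rintro ⟨⟨-, hE⟩, hV⟩; exact ⟨hE, hV⟩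
            · rintro ⟨hE, hV⟩
              have : Pr P (E ∩ V (k ω₀) ω) / Pr P (V (k ω₀) ω) < θ := by
                rw [Vcoh le_rfl hV]; exact hkbad
              exact ⟨⟨⟨k ω₀, hkN, this⟩, hE⟩, hV⟩
          have h2 : Finset.univ.filter (fun ω => f ω = v)
              = Finset.univ.filter (fun ω => ω ∈ V (k ω₀) ω₀) := by
            ext ω
            simp only [Finset.mem_filter, Finset.mem_univ, true_and, hfib]
          rw [h1, h2, ← Pr_eq_sum_filter, ← Pr_eq_sum_filter]
          -- Pr P (E ∩ V) ≤ θ * Pr P V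
          rcases (Pr_nonneg hP (V (k ω₀) ω₀)).lt_or_eq with hpos | hzero
          · exact le_of_lt ((div_lt_iff₀ hpos).1 hkbad)
          · have hle : Pr P (E ∩ V (k ω₀) ω₀) ≤ 0 := by
              rw [hzero]; exact Pr_mono hP Set.inter_subset_right
            have hge : 0 ≤ Pr P (E ∩ V (k ω₀) ω₀) := Pr_nonneg hP _
            rw [le_antisymm hle hge, ← hzero, mul_zero]
        · rw [Finset.not_nonempty_iff_eq_empty] at hne
          rw [hne, Finset.sum_empty]
          exact mul_nonneg hθ0 (Finset.sum_nonneg fun ω _ => hP ω)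
    _ = θ * ∑ v ∈ t, ∑ ω ∈ Finset.univ.filter (fun ω => f ω = v), P ω :=
        (Finset.mul_sum _ _ _).symm
    _ = θ * ∑ ω, P ω := by
        rw [Finset.sum_fiberwise_eq_sum_filter Finset.univ t f P,
          Finset.filter_true_of_mem fun ω _ => Finset.mem_image_of_mem f (Finset.mem_univ ω)]
    _ = θ := by rw [hsum, mul_one]

/-- Corollary `inputsLikely`: the actual inputs `(x, y)` of Alice and
Bob do not become `θ`-unlikely conditioned on Eve's view at some round, except with
probability at most `θ / P(A = x, B = y)` (conditioned on the inputs being `(x,y)`). -/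
theorem inputs_stay_likely {Ω 𝒳 𝒴 M : Type*} [Fintype Ω] (P : Ω → ℝ)
    (hP : ∀ ω, 0 ≤ P ω) (hsum : ∑ ω, P ω = 1)
    (A : Ω → 𝒳) (B : Ω → 𝒴) (x : 𝒳) (y : 𝒴)
    (hxy : 0 < Pr P {ω | A ω = x ∧ B ω = y})
    (N : ℕ) (m : Fin N → Ω → M) (θ : ℝ) (hθ0 : 0 ≤ θ) (hθ1 : θ ≤ 1) :
    Pr P ({ω | ∃ i ≤ N,
        Pr P ({ω' | A ω' = x ∧ B ω' = y} ∩
              {ω' | ∀ j : Fin N, (j : ℕ) < i → m j ω' = m j ω}) /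
          Pr P {ω' | ∀ j : Fin N, (j : ℕ) < i → m j ω' = m j ω} < θ}
        ∩ {ω | A ω = x ∧ B ω = y}) / Pr P {ω | A ω = x ∧ B ω = y}
      ≤ θ / Pr P {ω | A ω = x ∧ B ω = y} :=
  (div_le_div_iff_of_pos_right hxy).2 (key P hP hsum {ω | A ω = x ∧ B ω = y} N m θ hθ0)
end
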